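/- arXiv:1708.00334 — 5 statements merged into one kernel-verified Lean document; each statement's English description precedes it below -/
import Mathlib

section
/- Let Λ be the exterior algebra of a real vector space V and d : Λ → Λ an antiderivation of degree one. Let θ^1,…,θ^4, η^1,…,η^4, Γ and ω^i_j (1 ≤ i,j ≤ 4) be degree-one elements of Λ; write ε₁ = 1, ε₂ = ε₃ = ε₄ = −1, θ_i := ε_i θ^i, η_i := ε_i η^i, and assume the Lorentz antisymmetry ε_i ω^i_j = −ε_j ω^j_i for all i, j. Define Dθ^i := dθ^i + Σ_j ω^i_j∧θ^j, Dη^i := dη^i + Σ_j ω^i_j∧η^j, and the curvature components R^{i5} := Dθ^i + η^i∧Γ and R^{i6} := −(Dη^i − θ^i∧Γ). Then Σ_i (R^{i5}∧η_i + θ_i∧R^{i6}) = d(Σ_i θ^i∧η_i). This is the identity of equations (80)–(81) in the Proof of Section 'Maxwell equations and the electromagnetic field' of the paper. -/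
open ExteriorAlgebra

set_option maxHeartbeats 1000000 in
theorem stmt10 (V : Type*) [AddCommGroup V] [Module ℝ V]
    (d : ExteriorAlgebra ℝ V →ₗ[ℝ] ExteriorAlgebra ℝ V)
    (hd : ∀ (p : ℕ) (x : ExteriorAlgebra ℝ V),
      x ∈ (LinearMap.range (ι ℝ : V →ₗ[ℝ] ExteriorAlgebra ℝ V) ^ p :
        Submodule ℝ (ExteriorAlgebra ℝ V)) →
      ∀ y : ExteriorAlgebra ℝ V, d (x * y) = d x * y + ((-1 : ℝ) ^ p) • (x * d y))
    (θ ηf : Fin 4 → ExteriorAlgebra ℝ V)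
    (Γ : ExteriorAlgebra ℝ V)
    (ω : Fin 4 → Fin 4 → ExteriorAlgebra ℝ V)
    (hθ : ∀ i, θ i ∈ Set.range (ι ℝ : V →ₗ[ℝ] ExteriorAlgebra ℝ V))
    (hη : ∀ i, ηf i ∈ Set.range (ι ℝ : V →ₗ[ℝ] ExteriorAlgebra ℝ V))
    (hΓ : Γ ∈ Set.range (ι ℝ : V →ₗ[ℝ] ExteriorAlgebra ℝ V))
    (hω : ∀ i j, ω i j ∈ Set.range (ι ℝ : V →ₗ[ℝ] ExteriorAlgebra ℝ V))
    (ε : Fin 4 → ℝ) (hε : ε = ![1, -1, -1, -1])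
    (hanti : ∀ i j, ε i • ω i j = -(ε j • ω j i))
    (R5 R6 : Fin 4 → ExteriorAlgebra ℝ V)
    (hR5 : ∀ i, R5 i = (d (θ i) + ∑ j, ω i j * θ j) + ηf i * Γ)
    (hR6 : ∀ i, R6 i = -((d (ηf i) + ∑ j, ω i j * ηf j) - θ i * Γ)) :
    ∑ i, (R5 i * (ε i • ηf i) + (ε i • θ i) * R6 i) =
      d (∑ i, θ i * (ε i • ηf i)) := by
  -- basic facts about degree-one elements
  have hsq : ∀ a : ExteriorAlgebra ℝ V,
      a ∈ Set.range (ι ℝ : V →ₗ[ℝ] ExteriorAlgebra ℝ V) → a * a = 0 := by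
    rintro a ⟨v, rfl⟩; exact ι_sq_zero v
  have hswap : ∀ a b : ExteriorAlgebra ℝ V,
      a ∈ Set.range (ι ℝ : V →ₗ[ℝ] ExteriorAlgebra ℝ V) →
      b ∈ Set.range (ι ℝ : V →ₗ[ℝ] ExteriorAlgebra ℝ V) → a * b = -(b * a) := by
    rintro a b ⟨v, rfl⟩ ⟨w, rfl⟩
    exact eq_neg_of_add_eq_zero_left (ι_add_mul_swap v w)
  -- antiderivation on degree-one elements
  have hdm : ∀ a : ExteriorAlgebra ℝ V,
      a ∈ Set.range (ι ℝ : V →ₗ[ℝ] ExteriorAlgebra ℝ V) →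
      ∀ y, d (a * y) = d a * y - a * d y := by
    intro a ha y
    have ha1 : a ∈ (LinearMap.range (ι ℝ : V →ₗ[ℝ] ExteriorAlgebra ℝ V) ^ 1 :
        Submodule ℝ (ExteriorAlgebra ℝ V)) := by
      rw [pow_one]
      obtain ⟨v, rfl⟩ := ha
      exact ⟨v, rfl⟩
    have h := hd 1 a ha1 y
    rw [h]
    simp [sub_eq_add_neg]
  -- per-index expansion of the left-hand side
  have key : ∀ i, R5 i * (ε i • ηf i) + (ε i • θ i) * R6 i
      = ε i • (d (θ i) * ηf i - θ i * d (ηf i))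
        + ∑ j, ε i • (ω i j * (θ j * ηf i + θ i * ηf j)) := by
    intro i
    have e1 : ηf i * Γ * ηf i = 0 := by
      rw [mul_assoc, hswap Γ (ηf i) hΓ (hη i), mul_neg, ← mul_assoc,
        hsq _ (hη i), zero_mul, neg_zero]
    have e2 : θ i * (θ i * Γ) = 0 := by
      rw [← mul_assoc, hsq _ (hθ i), zero_mul]
    have e3 : ∀ j, ω i j * θ j * ηf i - θ i * (ω i j * ηf j)
        = ω i j * (θ j * ηf i + θ i * ηf j) := by
      intro j
      rw [← mul_assoc (θ i), hswap (θ i) (ω i j) (hθ i) (hω i j), neg_mul,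
        mul_assoc (ω i j) (θ i), sub_neg_eq_add, mul_add, mul_assoc]
    have e4 : (∑ j, ω i j * (θ j * ηf i + θ i * ηf j))
        = (∑ j, ω i j * θ j * ηf i) - ∑ j, θ i * (ω i j * ηf j) := by
      rw [← Finset.sum_sub_distrib]
      exact Finset.sum_congr rfl fun j _ => (e3 j).symm
    rw [hR5, hR6, mul_smul_comm, smul_mul_assoc, ← Finset.smul_sum, ← smul_add,
      ← smul_add]
    congr 1
    rw [e4, add_mul, add_mul, Finset.sum_mul, e1, mul_neg, mul_sub, mul_add,
      Finset.mul_sum, e2]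
    abel
  calc ∑ i, (R5 i * (ε i • ηf i) + (ε i • θ i) * R6 i)
      = (∑ i, ε i • (d (θ i) * ηf i - θ i * d (ηf i)))
        + ∑ i, ∑ j, ε i • (ω i j * (θ j * ηf i + θ i * ηf j)) := by
        rw [← Finset.sum_add_distrib]
        exact Finset.sum_congr rfl fun i _ => key i
    _ = ∑ i, ε i • (d (θ i) * ηf i - θ i * d (ηf i)) := by
        have hanti' : ∀ i j : Fin 4,
            ε j • (ω j i * (θ i * ηf j + θ j * ηf i))
              = -(ε i • (ω i j * (θ j * ηf i + θ i * ηf j))) := by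
          intro i j
          rw [add_comm (θ i * ηf j), ← smul_mul_assoc, ← smul_mul_assoc,
            hanti j i, neg_mul]
        set S := ∑ i, ∑ j, ε i • (ω i j * (θ j * ηf i + θ i * ηf j)) with hSdef
        have hneg : S = -S := by
          calc S = ∑ j, ∑ i, ε i • (ω i j * (θ j * ηf i + θ i * ηf j)) :=
                Finset.sum_comm
            _ = ∑ i, ∑ j, -(ε i • (ω i j * (θ j * ηf i + θ i * ηf j))) :=
                Finset.sum_congr rfl fun i _ => Finset.sum_congr rfl
                  fun j _ => hanti' i j
            _ = -S := by rw [hSdef]; simp only [Finset.sum_neg_distrib]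
        have h2 : (2 : ℝ) • S = 0 := by
          rw [two_smul]
          nth_rewrite 1 [hneg]
          simp
        rcases smul_eq_zero.mp h2 with h | h
        · norm_num at h
        · rw [h, add_zero]
    _ = d (∑ i, θ i * (ε i • ηf i)) := by
        rw [map_sum]
        refine Finset.sum_congr rfl fun i _ => ?_
        rw [mul_smul_comm, map_smul, hdm (θ i) (hθ i)]
end

section
/- Under the hypotheses of the preceding identity (θ^i, η^i, Γ, ω^i_j degree-one elements of the exterior algebra Λ with d an antiderivation of degree one, ε_i ω^i_j = −ε_j ω^j_i, R^{i5} := Dθ^i + η^i∧Γ, R^{i6} := −(Dη^i − θ^i∧Γ)), if R^{i5} = 0 and R^{i6} = 0 for every i = 1,…,4, then d(Σ_i θ^i∧η_i) = 0; i.e. the vanishing of the curvatures R^{i5} and R^{i6} enforces the Bianchi/Maxwell condition D(θ^i∧η_i) = 0 (equivalently ∇_{[ρ} f_{μν]} = 0) of equations (78)–(79) of the paper. -/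
open ExteriorAlgebra

theorem stmt11 (V : Type*) [AddCommGroup V] [Module ℝ V]
    (d : ExteriorAlgebra ℝ V →ₗ[ℝ] ExteriorAlgebra ℝ V)
    (hd : ∀ (p : ℕ) (x : ExteriorAlgebra ℝ V),
      x ∈ (LinearMap.range (ι ℝ : V →ₗ[ℝ] ExteriorAlgebra ℝ V) ^ p :
        Submodule ℝ (ExteriorAlgebra ℝ V)) →
      ∀ y : ExteriorAlgebra ℝ V, d (x * y) = d x * y + ((-1 : ℝ) ^ p) • (x * d y))
    (θ ηf : Fin 4 → ExteriorAlgebra ℝ V)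
    (Γ : ExteriorAlgebra ℝ V)
    (ω : Fin 4 → Fin 4 → ExteriorAlgebra ℝ V)
    (hθ : ∀ i, θ i ∈ Set.range (ι ℝ : V →ₗ[ℝ] ExteriorAlgebra ℝ V))
    (hη : ∀ i, ηf i ∈ Set.range (ι ℝ : V →ₗ[ℝ] ExteriorAlgebra ℝ V))
    (hΓ : Γ ∈ Set.range (ι ℝ : V →ₗ[ℝ] ExteriorAlgebra ℝ V))
    (hω : ∀ i j, ω i j ∈ Set.range (ι ℝ : V →ₗ[ℝ] ExteriorAlgebra ℝ V))
    (ε : Fin 4 → ℝ) (hε : ε = ![1, -1, -1, -1])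
    (hanti : ∀ i j, ε i • ω i j = -(ε j • ω j i))
    (R5 R6 : Fin 4 → ExteriorAlgebra ℝ V)
    (hR5 : ∀ i, R5 i = (d (θ i) + ∑ j, ω i j * θ j) + ηf i * Γ)
    (hR6 : ∀ i, R6 i = -((d (ηf i) + ∑ j, ω i j * ηf j) - θ i * Γ))
    (hR5z : ∀ i, R5 i = 0) (hR6z : ∀ i, R6 i = 0) :
    d (∑ i, θ i * (ε i • ηf i)) = 0 := by
  -- basic facts about degree-one elements
  have anti : ∀ a b : ExteriorAlgebra ℝ V,
      a ∈ Set.range (ι ℝ : V →ₗ[ℝ] ExteriorAlgebra ℝ V) →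
      b ∈ Set.range (ι ℝ : V →ₗ[ℝ] ExteriorAlgebra ℝ V) → a * b = -(b * a) := by
    rintro _ _ ⟨v, rfl⟩ ⟨w, rfl⟩
    exact eq_neg_of_add_eq_zero_left (ι_add_mul_swap v w)
  have sq0 : ∀ a : ExteriorAlgebra ℝ V,
      a ∈ Set.range (ι ℝ : V →ₗ[ℝ] ExteriorAlgebra ℝ V) → a * a = 0 := by
    rintro _ ⟨v, rfl⟩; exact ι_sq_zero v
  have leib : ∀ a : ExteriorAlgebra ℝ V,
      a ∈ Set.range (ι ℝ : V →ₗ[ℝ] ExteriorAlgebra ℝ V) →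
      ∀ y, d (a * y) = d a * y - a * d y := by
    rintro a ha y
    have ha1 : a ∈ (LinearMap.range (ι ℝ : V →ₗ[ℝ] ExteriorAlgebra ℝ V) ^ 1 :
        Submodule ℝ (ExteriorAlgebra ℝ V)) := by
      rw [pow_one]; obtain ⟨v, rfl⟩ := ha; exact ⟨v, rfl⟩
    have := hd 1 a ha1 y
    simpa [sub_eq_add_neg] using this
  -- solve for d(θ i) and d(ηf i)
  have hdθ : ∀ i, d (θ i) = -((∑ j, ω i j * θ j) + ηf i * Γ) := by
    intro i
    have h := hR5z i; rw [hR5 i, add_assoc] at h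
    exact eq_neg_of_add_eq_zero_left h
  have hdη : ∀ i, d (ηf i) = θ i * Γ - ∑ j, ω i j * ηf j := by
    intro i
    have h := hR6z i; rw [hR6 i, neg_eq_zero, sub_eq_zero] at h
    exact eq_sub_of_add_eq h
  rw [map_sum]
  have key : ∀ i, d (θ i * (ε i • ηf i))
      = ε i • (θ i * (∑ j, ω i j * ηf j)) - ε i • ((∑ j, ω i j * θ j) * ηf i) := by
    intro i
    rw [mul_smul_comm, map_smul, leib _ (hθ i), hdθ i, hdη i, smul_sub]
    have h1 : ηf i * Γ * ηf i = 0 := by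
      rw [anti (ηf i) Γ (hη i) hΓ, neg_mul, mul_assoc, sq0 _ (hη i), mul_zero, neg_zero]
    have h2 : θ i * (θ i * Γ) = 0 := by
      rw [← mul_assoc, sq0 _ (hθ i), zero_mul]
    rw [neg_mul, add_mul, h1, add_zero, mul_sub, h2, zero_sub]
    simp only [smul_neg]
    abel
  simp_rw [key]
  have t1 : ∀ i, θ i * (∑ j, ω i j * ηf j) = ∑ j, -(ω i j * (θ i * ηf j)) := by
    intro i; rw [Finset.mul_sum]
    refine Finset.sum_congr rfl fun j _ => ?_
    rw [← mul_assoc, anti (θ i) (ω i j) (hθ i) (hω i j), neg_mul, mul_assoc]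
  have t2 : ∀ i, ε i • ((∑ j, ω i j * θ j) * ηf i)
      = ∑ j, -(ε j • (ω j i * (θ j * ηf i))) := by
    intro i; rw [Finset.sum_mul, Finset.smul_sum]
    refine Finset.sum_congr rfl fun j _ => ?_
    rw [mul_assoc, ← smul_mul_assoc, hanti i j, neg_mul, smul_mul_assoc]
  simp_rw [t1, t2, Finset.smul_sum, smul_neg, ← Finset.sum_sub_distrib, neg_sub_neg]
  simp_rw [Finset.sum_sub_distrib]
  rw [Finset.sum_comm (f := fun i j => ε j • (ω j i * (θ j * ηf i)))]
  exact sub_self _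
end

section
/- Corollary (electromagnetic field). Under the hypotheses of the preceding statement (R^{i5} = 0 and R^{i6} = 0 for all i), let c be a nonzero real number, let A be a degree-one element of Λ, and suppose in addition that the scalar curvature component vanishes: R^{56} := dA + c·Σ_i θ_i∧η^i = 0. Then the 2-form F := −c·Σ_i θ_i∧η^i satisfies dA = F (F is exact) and dF = 0 (F is closed); i.e. F obeys both Maxwell equations, as in equations (82)–(83) of the paper. -/
open ExteriorAlgebra

private lemma ext_anticomm {V : Type*} [AddCommGroup V] [Module ℝ V]
    {x y : ExteriorAlgebra ℝ V} (hx : x ∈ Set.range (ι ℝ : V →ₗ[ℝ] ExteriorAlgebra ℝ V))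
    (hy : y ∈ Set.range (ι ℝ : V →ₗ[ℝ] ExteriorAlgebra ℝ V)) : x * y = -(y * x) := by
  obtain ⟨a, rfl⟩ := hx
  obtain ⟨b, rfl⟩ := hy
  have h := ExteriorAlgebra.ι_add_mul_swap (R := ℝ) a b
  exact eq_neg_of_add_eq_zero_left h

theorem stmt12 (V : Type*) [AddCommGroup V] [Module ℝ V]
    (d : ExteriorAlgebra ℝ V →ₗ[ℝ] ExteriorAlgebra ℝ V)
    (hd : ∀ (p : ℕ) (x : ExteriorAlgebra ℝ V),
      x ∈ (LinearMap.range (ι ℝ : V →ₗ[ℝ] ExteriorAlgebra ℝ V) ^ p :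
        Submodule ℝ (ExteriorAlgebra ℝ V)) →
      ∀ y : ExteriorAlgebra ℝ V, d (x * y) = d x * y + ((-1 : ℝ) ^ p) • (x * d y))
    (θ ηf : Fin 4 → ExteriorAlgebra ℝ V)
    (Γ : ExteriorAlgebra ℝ V)
    (ω : Fin 4 → Fin 4 → ExteriorAlgebra ℝ V)
    (hθ : ∀ i, θ i ∈ Set.range (ι ℝ : V →ₗ[ℝ] ExteriorAlgebra ℝ V))
    (hη : ∀ i, ηf i ∈ Set.range (ι ℝ : V →ₗ[ℝ] ExteriorAlgebra ℝ V))
    (hΓ : Γ ∈ Set.range (ι ℝ : V →ₗ[ℝ] ExteriorAlgebra ℝ V))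
    (hω : ∀ i j, ω i j ∈ Set.range (ι ℝ : V →ₗ[ℝ] ExteriorAlgebra ℝ V))
    (ε : Fin 4 → ℝ) (hε : ε = ![1, -1, -1, -1])
    (hanti : ∀ i j, ε i • ω i j = -(ε j • ω j i))
    (hR5z : ∀ i, (d (θ i) + ∑ j, ω i j * θ j) + ηf i * Γ = 0)
    (hR6z : ∀ i, -((d (ηf i) + ∑ j, ω i j * ηf j) - θ i * Γ) = 0)
    (c : ℝ) (hc : c ≠ 0)
    (A : ExteriorAlgebra ℝ V)
    (hA : A ∈ Set.range (ι ℝ : V →ₗ[ℝ] ExteriorAlgebra ℝ V))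
    (hR56 : d A + c • ∑ i, (ε i • θ i) * ηf i = 0)
    (F : ExteriorAlgebra ℝ V)
    (hF : F = -(c • ∑ i, (ε i • θ i) * ηf i)) :
    d A = F ∧ d F = 0 := by
  have hdA : d A = F := by
    rw [hF]; exact eq_neg_of_add_eq_zero_left hR56
  refine ⟨hdA, ?_⟩
  have hsq : ∀ x ∈ Set.range (ι ℝ : V →ₗ[ℝ] ExteriorAlgebra ℝ V), x * x = 0 := by
    rintro x ⟨a, rfl⟩; exact ExteriorAlgebra.ι_sq_zero a
  have hd1 : ∀ x ∈ Set.range (ι ℝ : V →ₗ[ℝ] ExteriorAlgebra ℝ V), ∀ y,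
      d (x * y) = d x * y - x * d y := by
    intro x hx y
    have hx' : x ∈ (LinearMap.range (ι ℝ : V →ₗ[ℝ] ExteriorAlgebra ℝ V) ^ 1 :
        Submodule ℝ (ExteriorAlgebra ℝ V)) := by
      rw [pow_one]; exact hx
    have h := hd 1 x hx' y
    rw [h]; simp [sub_eq_add_neg]
  have hdθ : ∀ i, d (θ i) = -(∑ j, ω i j * θ j) - ηf i * Γ := by
    intro i
    have h : d (θ i) + ((∑ j, ω i j * θ j) + ηf i * Γ) = 0 := by
      rw [← add_assoc]; exact hR5z i
    rw [eq_neg_of_add_eq_zero_left h]; abel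
  have hdη : ∀ i, d (ηf i) = θ i * Γ - ∑ j, ω i j * ηf j := by
    intro i
    have h := hR6z i
    rw [neg_eq_zero, sub_eq_zero] at h
    rw [eq_sub_iff_add_eq]
    exact h
  have hterm : ∀ i, d ((ε i • θ i) * ηf i) =
      -(∑ j, ε i • (ω i j * (θ j * ηf i))) - ∑ j, ε i • (ω i j * (θ i * ηf j)) := by
    intro i
    obtain ⟨a, ha⟩ := hθ i
    have hmem : (ε i • θ i) ∈ Set.range (ι ℝ : V →ₗ[ℝ] ExteriorAlgebra ℝ V) :=
      ⟨ε i • a, by rw [map_smul, ha]⟩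
    have h1 : ηf i * (Γ * ηf i) = 0 := by
      rw [ext_anticomm hΓ (hη i), mul_neg, ← mul_assoc, hsq _ (hη i), zero_mul, neg_zero]
    have h2 : θ i * (θ i * Γ) = 0 := by
      rw [← mul_assoc, hsq _ (hθ i), zero_mul]
    have h3 : ∀ j, θ i * (ω i j * ηf j) = -(ω i j * (θ i * ηf j)) := by
      intro j
      rw [← mul_assoc, ext_anticomm (hθ i) (hω i j), neg_mul, mul_assoc]
    rw [hd1 _ hmem (ηf i), map_smul, hdθ i, hdη i]
    simp only [smul_mul_assoc, sub_mul, mul_sub, neg_mul, Finset.sum_mul, Finset.mul_sum,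
      mul_assoc, h1, h2, h3, smul_sub, smul_add, smul_neg, Finset.smul_sum, neg_neg,
      sub_zero, zero_sub, neg_zero, smul_zero, Finset.sum_neg_distrib]
  have hswap : ∑ i, ∑ j, ε i • (ω i j * (θ j * ηf i))
      = -∑ i, ∑ j, ε i • (ω i j * (θ i * ηf j)) := by
    have key : ∀ i j, ε i • (ω i j * (θ j * ηf i)) = -(ε j • (ω j i * (θ j * ηf i))) := by
      intro i j
      rw [← smul_mul_assoc, hanti i j, ← smul_mul_assoc, neg_mul]
    simp_rw [key]
    rw [Finset.sum_comm]
    simp only [Finset.sum_neg_distrib]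
  have hdS : d (∑ i, (ε i • θ i) * ηf i) = 0 := by
    rw [map_sum]
    simp_rw [hterm]
    rw [Finset.sum_sub_distrib, Finset.sum_neg_distrib, hswap]
    abel
  rw [hF, map_neg, map_smul, hdS, smul_zero, neg_zero]
end

section
/- Let η̂ := diag(1,−1,−1,−1), let e be an invertible real 4×4 matrix and h a real 4×4 matrix such that f := eᵀ·η̂·h is antisymmetric (this encodes the relation e_{iν} f^i_μ = f_{μν} = −f_{νμ} of equation (77) of the paper). Define θ^i := Σ_μ e_{iμ}·x_μ and η^i := Σ_μ h_{iμ}·x_μ in Λ(ℝ⁴). Then Σ_{i,j,k,l=1}^{4} ε_{ijkl}·θ^i∧θ^j∧θ^k∧η^l = 6·det(e)·tr((eᵀη̂e)⁻¹·f)·vol = 0, since the trace of the product of the symmetric matrix (eᵀη̂e)⁻¹ with the antisymmetric matrix f vanishes. This is the paper's claim (i) of Section 5.1: the mixed terms η∧θ∧θ∧θ in the action vanish. -/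
open Matrix ExteriorAlgebra

/-- The Levi-Civita symbol on four indices, `lev i j k l` being the sign of the
permutation `(1,2,3,4) ↦ (i,j,k,l)` if it is a permutation and `0` otherwise;
in particular `lev 0 1 2 3 = 1`. -/
noncomputable def lev (i j k l : Fin 4) : ℝ :=
  Matrix.det (Matrix.of fun r c : Fin 4 => if c = ![i, j, k, l] r then (1 : ℝ) else 0)

/-- The degree-one generators `x₁, x₂, x₃, x₄` of the exterior algebra of ℝ⁴. -/
noncomputable def xv (μ : Fin 4) : ExteriorAlgebra ℝ (Fin 4 → ℝ) :=
  ExteriorAlgebra.ι ℝ (Pi.single μ 1)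

/-- The volume element `x₁ ∧ x₂ ∧ x₃ ∧ x₄`. -/
noncomputable def vol : ExteriorAlgebra ℝ (Fin 4 → ℝ) := xv 0 * xv 1 * xv 2 * xv 3

/-- The Minkowski metric `η̂ = diag(1,−1,−1,−1)`. -/
noncomputable def etaHat : Matrix (Fin 4) (Fin 4) ℝ := Matrix.diagonal ![1, -1, -1, -1]


/-!
Write `η^l = Σ_m c_{lm} θ^m` with `c = h e⁻¹`. Since `θ^i ∧ θ^j ∧ θ^k ∧ θ^m = ε_{ijkm} det(e) vol`,
the contraction `Σ_{ijk} ε_{ijkl} ε_{ijkm} = 6 δ_{lm}` turns the sum into `6 det(e) tr(c) vol`.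
Moreover `tr(c) = tr(e⁻¹ h) = tr((eᵀη̂e)⁻¹ f)`, the trace of a symmetric matrix times an
antisymmetric one, which equals minus itself and hence vanishes.
-/

theorem AlternatingMap.apply_eq_basis_det_smul {R M N ι : Type*} [CommRing R] [AddCommGroup M]
    [Module R M] [AddCommGroup N] [Module R N] [Fintype ι] [DecidableEq ι]
    (b : Module.Basis ι R M) (f : M [⋀^ι]→ₗ[R] N) (v : ι → M) :
    f v = b.det v • f b := by
  suffices f = (LinearMap.toSpanSingleton R N (f b)).compAlternatingMap b.det from
    congrArg (· v) this
  refine b.ext_alternating fun i hi => ?_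
  let σ : Equiv.Perm ι := Equiv.ofBijective i (Finite.injective_iff_bijective.1 hi)
  change f (b ∘ σ) = b.det (b ∘ σ) • f b
  simp [AlternatingMap.map_perm, Module.Basis.det_self]

theorem Matrix.det_submatrix_id_right {n R : Type*} [Fintype n] [DecidableEq n] [CommRing R]
    (A : Matrix n n R) (v : n → n) :
    (A.submatrix v id).det = ((1 : Matrix n n R).submatrix v id).det * A.det := by
  rw [← det_mul, ← submatrix_id_id A, ← submatrix_mul _ _ _ _ _ Function.bijective_id,
    Matrix.one_mul, submatrix_id_id]

theorem sum_smul_xv (a : Fin 4 → ℝ) : ∑ μ, a μ • xv μ = ι ℝ a := by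
  conv_rhs => rw [← Finset.univ_sum_single a]
  simp only [xv, ← map_smul, map_sum, ← Pi.single_smul, smul_eq_mul, mul_one]

theorem ιMulti_fin_four {R M : Type*} [CommRing R] [AddCommGroup M] [Module R M]
    (v : Fin 4 → M) : ιMulti R 4 v = ι R (v 0) * ι R (v 1) * ι R (v 2) * ι R (v 3) := by
  rw [ιMulti_apply]
  simp [List.ofFn_succ, mul_assoc]

theorem ιMulti_eq_det_smul_vol (v : Fin 4 → Fin 4 → ℝ) : ιMulti ℝ 4 v = (of v).det • vol := by
  rw [AlternatingMap.apply_eq_basis_det_smul (Pi.basisFun ℝ (Fin 4)), Pi.basisFun_det_apply]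
  congr 1
  rw [ιMulti_fin_four]
  simp only [Pi.basisFun_apply]
  rfl

theorem lev_eq_det_submatrix (i j k l : Fin 4) :
    lev i j k l = ((1 : Matrix (Fin 4) (Fin 4) ℝ).submatrix ![i, j, k, l] id).det := by
  simp only [lev, submatrix, one_apply, eq_comm, id]

theorem ι_mul_ι_mul_ι_mul_ι (e : Matrix (Fin 4) (Fin 4) ℝ) (i j k l : Fin 4) :
    ι ℝ (e i) * ι ℝ (e j) * ι ℝ (e k) * ι ℝ (e l) = (lev i j k l * e.det) • vol := by
  have hdet : lev i j k l * e.det = (of fun r => e (![i, j, k, l] r)).det := by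
    rw [lev_eq_det_submatrix, ← det_submatrix_id_right]
    rfl
  rw [hdet, ← ιMulti_eq_det_smul_vol, ιMulti_fin_four]
  rfl

-- An integer copy of `lev`, so that the contraction identity can be checked by `decide`.
def levInt (i j k l : Fin 4) : ℤ :=
  Matrix.det (Matrix.of fun r c : Fin 4 => if c = ![i, j, k, l] r then (1 : ℤ) else 0)

theorem lev_eq_cast_levInt (i j k l : Fin 4) : lev i j k l = levInt i j k l := by
  rw [lev, levInt, ← eq_intCast (Int.castRingHom ℝ), RingHom.map_det]
  congr 1
  ext r c
  simp [apply_ite]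

theorem sum_levInt_mul_levInt (l m : Fin 4) :
    ∑ i, ∑ j, ∑ k, levInt i j k l * levInt i j k m = if l = m then 6 else 0 := by
  revert l m
  decide

theorem sum_lev_mul_lev (l m : Fin 4) :
    ∑ i, ∑ j, ∑ k, lev i j k l * lev i j k m = if l = m then 6 else 0 := by
  simp only [lev_eq_cast_levInt]
  exact_mod_cast sum_levInt_mul_levInt l m

theorem sum_lev_smul_ι_mul_ι_mul_ι_mul_ι_eq_ite (e : Matrix (Fin 4) (Fin 4) ℝ) (l m : Fin 4) :
    (∑ i, ∑ j, ∑ k, lev i j k l • (ι ℝ (e i) * ι ℝ (e j) * ι ℝ (e k))) * ι ℝ (e m) =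
      (if l = m then 6 * e.det else 0) • vol := by
  simp only [Finset.sum_mul, smul_mul_assoc, ι_mul_ι_mul_ι_mul_ι, smul_smul, ← Finset.sum_smul,
    ← mul_assoc]
  simp only [← Finset.sum_mul, sum_lev_mul_lev, ite_mul, zero_mul]

theorem sum_lev_smul_ι_mul_ι_mul_ι_mul_ι_mul_eq_trace (e c : Matrix (Fin 4) (Fin 4) ℝ) :
    ∑ i, ∑ j, ∑ k, ∑ l, lev i j k l • (ι ℝ (e i) * ι ℝ (e j) * ι ℝ (e k) * ι ℝ ((c * e) l)) =
      (6 * e.det * c.trace) • vol := by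
  have hrow (l : Fin 4) : ι ℝ ((c * e) l) = ∑ m, c l m • ι ℝ (e m) := by
    rw [mul_apply_eq_vecMul, vecMul_eq_sum, map_sum]
    simp only [map_smul]
  calc _ = ∑ l, (∑ i, ∑ j, ∑ k, lev i j k l • (ι ℝ (e i) * ι ℝ (e j) * ι ℝ (e k))) *
        ι ℝ ((c * e) l) := by
        rw [(Finset.sum_congr rfl fun _ _ => Finset.sum_comm_cycle).trans Finset.sum_comm]
        simp only [Finset.sum_mul, smul_mul_assoc]
    _ = ∑ l, ∑ m, c l m • (if l = m then 6 * e.det else 0) • vol := by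
        simp only [hrow, Finset.mul_sum, mul_smul_comm, sum_lev_smul_ι_mul_ι_mul_ι_mul_ι_eq_ite]
    _ = _ := by
        simp only [smul_smul, ← Finset.sum_smul, mul_ite, mul_zero, Finset.sum_ite_eq,
          Finset.mem_univ, if_true, trace, diag, Finset.sum_mul, mul_comm (6 * e.det)]

theorem Matrix.trace_mul_eq_zero_of_isSymm {n R : Type*} [Fintype n] [CommRing R]
    [NoZeroDivisors R] [CharZero R] {S A : Matrix n n R} (hS : S.IsSymm) (hA : Aᵀ = -A) :
    (S * A).trace = 0 := by
  refine CharZero.eq_neg_self_iff.mp ?_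
  conv_lhs => rw [← trace_transpose, transpose_mul, hA, hS.eq, neg_mul, trace_neg, trace_mul_comm]

theorem Matrix.inv_transpose_mul_mul_mul_transpose_mul_mul {n R : Type*} [Fintype n]
    [DecidableEq n] [CommRing R] {G e : Matrix n n R} (hG : IsUnit G.det) (he : IsUnit e.det)
    (h : Matrix n n R) : (eᵀ * G * e)⁻¹ * (eᵀ * G * h) = e⁻¹ * h := by
  rw [mul_inv_rev, mul_inv_rev]
  simp only [Matrix.mul_assoc]
  rw [nonsing_inv_mul_cancel_left _ _ (by rwa [det_transpose]),
    nonsing_inv_mul_cancel_left _ _ hG]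

theorem Matrix.IsSymm.transpose_mul_mul_self {n R : Type*} [Fintype n] [CommRing R]
    {G : Matrix n n R} (hG : G.IsSymm) (e : Matrix n n R) : (eᵀ * G * e).IsSymm := by
  rw [IsSymm, transpose_mul, transpose_mul, hG.eq, transpose_transpose, Matrix.mul_assoc]

theorem etaHat_isSymm : etaHat.IsSymm := isSymm_diagonal _

theorem isUnit_det_etaHat : IsUnit etaHat.det := by
  simp [etaHat, det_diagonal, Fin.prod_univ_four]

theorem stmt15 (e h : Matrix (Fin 4) (Fin 4) ℝ) (he : IsUnit e.det)
    (f : Matrix (Fin 4) (Fin 4) ℝ) (hfdef : f = eᵀ * etaHat * h) (hf : fᵀ = -f)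
    (θ ηv : Fin 4 → ExteriorAlgebra ℝ (Fin 4 → ℝ))
    (hθ : ∀ i, θ i = ∑ μ, e i μ • xv μ)
    (hη : ∀ i, ηv i = ∑ μ, h i μ • xv μ) :
    ∑ i, ∑ j, ∑ k, ∑ l, lev i j k l • (θ i * θ j * θ k * ηv l) =
      (6 * e.det * ((eᵀ * etaHat * e)⁻¹ * f).trace) • vol ∧
    ∑ i, ∑ j, ∑ k, ∑ l, lev i j k l • (θ i * θ j * θ k * ηv l) = 0 := by
  have hce : h * e⁻¹ * e = h := by rw [Matrix.mul_assoc, nonsing_inv_mul e he, Matrix.mul_one]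
  have htrace : ((eᵀ * etaHat * e)⁻¹ * f).trace = (h * e⁻¹).trace := by
    rw [hfdef, inv_transpose_mul_mul_mul_transpose_mul_mul isUnit_det_etaHat he, trace_mul_comm]
  have hzero : ((eᵀ * etaHat * e)⁻¹ * f).trace = 0 :=
    trace_mul_eq_zero_of_isSymm (etaHat_isSymm.transpose_mul_mul_self e).inv hf
  have hθι (i : Fin 4) : θ i = ι ℝ (e i) := by rw [hθ, sum_smul_xv]
  have hηι (l : Fin 4) : ηv l = ι ℝ ((h * e⁻¹ * e) l) := by rw [hη, sum_smul_xv, hce]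
  have hsum : ∑ i, ∑ j, ∑ k, ∑ l, lev i j k l • (θ i * θ j * θ k * ηv l) =
      (6 * e.det * ((eᵀ * etaHat * e)⁻¹ * f).trace) • vol := by
    simp only [hθι, hηι, sum_lev_smul_ι_mul_ι_mul_ι_mul_ι_mul_eq_trace, htrace]
  exact ⟨hsum, by rw [hsum, hzero, mul_zero, zero_smul]⟩
end

section
/- Let η̂ := diag(1,−1,−1,−1), let e be an invertible real 4×4 matrix and h a real 4×4 matrix such that f := eᵀ·η̂·h is antisymmetric, and set g := eᵀ·η̂·e (the induced metric). Define θ^i := Σ_μ e_{iμ}·x_μ and η^i := Σ_μ h_{iμ}·x_μ in Λ(ℝ⁴). Then Σ_{i,j,k,l=1}^{4} ε_{ijkl}·η^i∧η^j∧θ^k∧θ^l = −2·det(e)·tr((g⁻¹·f)²)·vol, i.e. it equals 2·det(e)·f^{μν}f_{μν}·vol where f^{μν}f_{μν} := tr(g⁻¹ f g⁻¹ fᵀ) is the contraction of the antisymmetric tensor f with itself using the metric g. This is the paper's claim (ii) of Section 5.1: the terms η∧η∧θ∧θ in the action produce the Maxwell term f^{kj}f_{kj}. -/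
open Matrix ExteriorAlgebra

lemma det_fin_four (A : Matrix (Fin 4) (Fin 4) ℝ) : det A =
    A 0 0 * (A 1 1 * (A 2 2 * A 3 3) - A 1 1 * (A 2 3 * A 3 2) - A 1 2 * (A 2 1 * A 3 3) + A 1 2 * (A 2 3 * A 3 1) + A 1 3 * (A 2 1 * A 3 2) - A 1 3 * (A 2 2 * A 3 1))
  - A 0 1 * (A 1 0 * (A 2 2 * A 3 3) - A 1 0 * (A 2 3 * A 3 2) - A 1 2 * (A 2 0 * A 3 3) + A 1 2 * (A 2 3 * A 3 0) + A 1 3 * (A 2 0 * A 3 2) - A 1 3 * (A 2 2 * A 3 0))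
  + A 0 2 * (A 1 0 * (A 2 1 * A 3 3) - A 1 0 * (A 2 3 * A 3 1) - A 1 1 * (A 2 0 * A 3 3) + A 1 1 * (A 2 3 * A 3 0) + A 1 3 * (A 2 0 * A 3 1) - A 1 3 * (A 2 1 * A 3 0))
  - A 0 3 * (A 1 0 * (A 2 1 * A 3 2) - A 1 0 * (A 2 2 * A 3 1) - A 1 1 * (A 2 0 * A 3 2) + A 1 1 * (A 2 2 * A 3 0) + A 1 2 * (A 2 0 * A 3 1) - A 1 2 * (A 2 1 * A 3 0)) := by
  rw [det_succ_row_zero]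
  simp (config := {decide := true}) [Fin.sum_univ_succ, Fin.succAbove, Matrix.det_fin_three,
    Matrix.submatrix_apply, Fin.succ, Fin.castSucc, Fin.castAdd, Fin.castLE]
  ring

@[simp] lemma lev_0000 : lev 0 0 0 0 = 0 := by simp (config := {decide := true}) [lev, det_fin_four]
@[simp] lemma lev_0001 : lev 0 0 0 1 = 0 := by simp (config := {decide := true}) [lev, det_fin_four]
@[simp] lemma lev_0002 : lev 0 0 0 2 = 0 := by simp (config := {decide := true}) [lev, det_fin_four]
@[simp] lemma lev_0003 : lev 0 0 0 3 = 0 := by simp (config := {decide := true}) [lev, det_fin_four]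
@[simp] lemma lev_0010 : lev 0 0 1 0 = 0 := by simp (config := {decide := true}) [lev, det_fin_four]
@[simp] lemma lev_0011 : lev 0 0 1 1 = 0 := by simp (config := {decide := true}) [lev, det_fin_four]
@[simp] lemma lev_0012 : lev 0 0 1 2 = 0 := by simp (config := {decide := true}) [lev, det_fin_four]
@[simp] lemma lev_0013 : lev 0 0 1 3 = 0 := by simp (config := {decide := true}) [lev, det_fin_four]
@[simp] lemma lev_0020 : lev 0 0 2 0 = 0 := by simp (config := {decide := true}) [lev, det_fin_four]
@[simp] lemma lev_0021 : lev 0 0 2 1 = 0 := by simp (config := {decide := true}) [lev, det_fin_four]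
@[simp] lemma lev_0022 : lev 0 0 2 2 = 0 := by simp (config := {decide := true}) [lev, det_fin_four]
@[simp] lemma lev_0023 : lev 0 0 2 3 = 0 := by simp (config := {decide := true}) [lev, det_fin_four]
@[simp] lemma lev_0030 : lev 0 0 3 0 = 0 := by simp (config := {decide := true}) [lev, det_fin_four]
@[simp] lemma lev_0031 : lev 0 0 3 1 = 0 := by simp (config := {decide := true}) [lev, det_fin_four]
@[simp] lemma lev_0032 : lev 0 0 3 2 = 0 := by simp (config := {decide := true}) [lev, det_fin_four]
@[simp] lemma lev_0033 : lev 0 0 3 3 = 0 := by simp (config := {decide := true}) [lev, det_fin_four]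
@[simp] lemma lev_0100 : lev 0 1 0 0 = 0 := by simp (config := {decide := true}) [lev, det_fin_four]
@[simp] lemma lev_0101 : lev 0 1 0 1 = 0 := by simp (config := {decide := true}) [lev, det_fin_four]
@[simp] lemma lev_0102 : lev 0 1 0 2 = 0 := by simp (config := {decide := true}) [lev, det_fin_four]
@[simp] lemma lev_0103 : lev 0 1 0 3 = 0 := by simp (config := {decide := true}) [lev, det_fin_four]
@[simp] lemma lev_0110 : lev 0 1 1 0 = 0 := by simp (config := {decide := true}) [lev, det_fin_four]
@[simp] lemma lev_0111 : lev 0 1 1 1 = 0 := by simp (config := {decide := true}) [lev, det_fin_four]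
@[simp] lemma lev_0112 : lev 0 1 1 2 = 0 := by simp (config := {decide := true}) [lev, det_fin_four]
@[simp] lemma lev_0113 : lev 0 1 1 3 = 0 := by simp (config := {decide := true}) [lev, det_fin_four]
@[simp] lemma lev_0120 : lev 0 1 2 0 = 0 := by simp (config := {decide := true}) [lev, det_fin_four]
@[simp] lemma lev_0121 : lev 0 1 2 1 = 0 := by simp (config := {decide := true}) [lev, det_fin_four]
@[simp] lemma lev_0122 : lev 0 1 2 2 = 0 := by simp (config := {decide := true}) [lev, det_fin_four]
@[simp] lemma lev_0123 : lev 0 1 2 3 = 1 := by simp (config := {decide := true}) [lev, det_fin_four]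
@[simp] lemma lev_0130 : lev 0 1 3 0 = 0 := by simp (config := {decide := true}) [lev, det_fin_four]
@[simp] lemma lev_0131 : lev 0 1 3 1 = 0 := by simp (config := {decide := true}) [lev, det_fin_four]
@[simp] lemma lev_0132 : lev 0 1 3 2 = -1 := by simp (config := {decide := true}) [lev, det_fin_four]
@[simp] lemma lev_0133 : lev 0 1 3 3 = 0 := by simp (config := {decide := true}) [lev, det_fin_four]
@[simp] lemma lev_0200 : lev 0 2 0 0 = 0 := by simp (config := {decide := true}) [lev, det_fin_four]
@[simp] lemma lev_0201 : lev 0 2 0 1 = 0 := by simp (config := {decide := true}) [lev, det_fin_four]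
@[simp] lemma lev_0202 : lev 0 2 0 2 = 0 := by simp (config := {decide := true}) [lev, det_fin_four]
@[simp] lemma lev_0203 : lev 0 2 0 3 = 0 := by simp (config := {decide := true}) [lev, det_fin_four]
@[simp] lemma lev_0210 : lev 0 2 1 0 = 0 := by simp (config := {decide := true}) [lev, det_fin_four]
@[simp] lemma lev_0211 : lev 0 2 1 1 = 0 := by simp (config := {decide := true}) [lev, det_fin_four]
@[simp] lemma lev_0212 : lev 0 2 1 2 = 0 := by simp (config := {decide := true}) [lev, det_fin_four]
@[simp] lemma lev_0213 : lev 0 2 1 3 = -1 := by simp (config := {decide := true}) [lev, det_fin_four]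
@[simp] lemma lev_0220 : lev 0 2 2 0 = 0 := by simp (config := {decide := true}) [lev, det_fin_four]
@[simp] lemma lev_0221 : lev 0 2 2 1 = 0 := by simp (config := {decide := true}) [lev, det_fin_four]
@[simp] lemma lev_0222 : lev 0 2 2 2 = 0 := by simp (config := {decide := true}) [lev, det_fin_four]
@[simp] lemma lev_0223 : lev 0 2 2 3 = 0 := by simp (config := {decide := true}) [lev, det_fin_four]
@[simp] lemma lev_0230 : lev 0 2 3 0 = 0 := by simp (config := {decide := true}) [lev, det_fin_four]
@[simp] lemma lev_0231 : lev 0 2 3 1 = 1 := by simp (config := {decide := true}) [lev, det_fin_four]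
@[simp] lemma lev_0232 : lev 0 2 3 2 = 0 := by simp (config := {decide := true}) [lev, det_fin_four]
@[simp] lemma lev_0233 : lev 0 2 3 3 = 0 := by simp (config := {decide := true}) [lev, det_fin_four]
@[simp] lemma lev_0300 : lev 0 3 0 0 = 0 := by simp (config := {decide := true}) [lev, det_fin_four]
@[simp] lemma lev_0301 : lev 0 3 0 1 = 0 := by simp (config := {decide := true}) [lev, det_fin_four]
@[simp] lemma lev_0302 : lev 0 3 0 2 = 0 := by simp (config := {decide := true}) [lev, det_fin_four]
@[simp] lemma lev_0303 : lev 0 3 0 3 = 0 := by simp (config := {decide := true}) [lev, det_fin_four]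
@[simp] lemma lev_0310 : lev 0 3 1 0 = 0 := by simp (config := {decide := true}) [lev, det_fin_four]
@[simp] lemma lev_0311 : lev 0 3 1 1 = 0 := by simp (config := {decide := true}) [lev, det_fin_four]
@[simp] lemma lev_0312 : lev 0 3 1 2 = 1 := by simp (config := {decide := true}) [lev, det_fin_four]
@[simp] lemma lev_0313 : lev 0 3 1 3 = 0 := by simp (config := {decide := true}) [lev, det_fin_four]
@[simp] lemma lev_0320 : lev 0 3 2 0 = 0 := by simp (config := {decide := true}) [lev, det_fin_four]
@[simp] lemma lev_0321 : lev 0 3 2 1 = -1 := by simp (config := {decide := true}) [lev, det_fin_four]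
@[simp] lemma lev_0322 : lev 0 3 2 2 = 0 := by simp (config := {decide := true}) [lev, det_fin_four]
@[simp] lemma lev_0323 : lev 0 3 2 3 = 0 := by simp (config := {decide := true}) [lev, det_fin_four]
@[simp] lemma lev_0330 : lev 0 3 3 0 = 0 := by simp (config := {decide := true}) [lev, det_fin_four]
@[simp] lemma lev_0331 : lev 0 3 3 1 = 0 := by simp (config := {decide := true}) [lev, det_fin_four]
@[simp] lemma lev_0332 : lev 0 3 3 2 = 0 := by simp (config := {decide := true}) [lev, det_fin_four]
@[simp] lemma lev_0333 : lev 0 3 3 3 = 0 := by simp (config := {decide := true}) [lev, det_fin_four]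
@[simp] lemma lev_1000 : lev 1 0 0 0 = 0 := by simp (config := {decide := true}) [lev, det_fin_four]
@[simp] lemma lev_1001 : lev 1 0 0 1 = 0 := by simp (config := {decide := true}) [lev, det_fin_four]
@[simp] lemma lev_1002 : lev 1 0 0 2 = 0 := by simp (config := {decide := true}) [lev, det_fin_four]
@[simp] lemma lev_1003 : lev 1 0 0 3 = 0 := by simp (config := {decide := true}) [lev, det_fin_four]
@[simp] lemma lev_1010 : lev 1 0 1 0 = 0 := by simp (config := {decide := true}) [lev, det_fin_four]
@[simp] lemma lev_1011 : lev 1 0 1 1 = 0 := by simp (config := {decide := true}) [lev, det_fin_four]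
@[simp] lemma lev_1012 : lev 1 0 1 2 = 0 := by simp (config := {decide := true}) [lev, det_fin_four]
@[simp] lemma lev_1013 : lev 1 0 1 3 = 0 := by simp (config := {decide := true}) [lev, det_fin_four]
@[simp] lemma lev_1020 : lev 1 0 2 0 = 0 := by simp (config := {decide := true}) [lev, det_fin_four]
@[simp] lemma lev_1021 : lev 1 0 2 1 = 0 := by simp (config := {decide := true}) [lev, det_fin_four]
@[simp] lemma lev_1022 : lev 1 0 2 2 = 0 := by simp (config := {decide := true}) [lev, det_fin_four]
@[simp] lemma lev_1023 : lev 1 0 2 3 = -1 := by simp (config := {decide := true}) [lev, det_fin_four]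
@[simp] lemma lev_1030 : lev 1 0 3 0 = 0 := by simp (config := {decide := true}) [lev, det_fin_four]
@[simp] lemma lev_1031 : lev 1 0 3 1 = 0 := by simp (config := {decide := true}) [lev, det_fin_four]
@[simp] lemma lev_1032 : lev 1 0 3 2 = 1 := by simp (config := {decide := true}) [lev, det_fin_four]
@[simp] lemma lev_1033 : lev 1 0 3 3 = 0 := by simp (config := {decide := true}) [lev, det_fin_four]
@[simp] lemma lev_1100 : lev 1 1 0 0 = 0 := by simp (config := {decide := true}) [lev, det_fin_four]
@[simp] lemma lev_1101 : lev 1 1 0 1 = 0 := by simp (config := {decide := true}) [lev, det_fin_four]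
@[simp] lemma lev_1102 : lev 1 1 0 2 = 0 := by simp (config := {decide := true}) [lev, det_fin_four]
@[simp] lemma lev_1103 : lev 1 1 0 3 = 0 := by simp (config := {decide := true}) [lev, det_fin_four]
@[simp] lemma lev_1110 : lev 1 1 1 0 = 0 := by simp (config := {decide := true}) [lev, det_fin_four]
@[simp] lemma lev_1111 : lev 1 1 1 1 = 0 := by simp (config := {decide := true}) [lev, det_fin_four]
@[simp] lemma lev_1112 : lev 1 1 1 2 = 0 := by simp (config := {decide := true}) [lev, det_fin_four]
@[simp] lemma lev_1113 : lev 1 1 1 3 = 0 := by simp (config := {decide := true}) [lev, det_fin_four]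
@[simp] lemma lev_1120 : lev 1 1 2 0 = 0 := by simp (config := {decide := true}) [lev, det_fin_four]
@[simp] lemma lev_1121 : lev 1 1 2 1 = 0 := by simp (config := {decide := true}) [lev, det_fin_four]
@[simp] lemma lev_1122 : lev 1 1 2 2 = 0 := by simp (config := {decide := true}) [lev, det_fin_four]
@[simp] lemma lev_1123 : lev 1 1 2 3 = 0 := by simp (config := {decide := true}) [lev, det_fin_four]
@[simp] lemma lev_1130 : lev 1 1 3 0 = 0 := by simp (config := {decide := true}) [lev, det_fin_four]
@[simp] lemma lev_1131 : lev 1 1 3 1 = 0 := by simp (config := {decide := true}) [lev, det_fin_four]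
@[simp] lemma lev_1132 : lev 1 1 3 2 = 0 := by simp (config := {decide := true}) [lev, det_fin_four]
@[simp] lemma lev_1133 : lev 1 1 3 3 = 0 := by simp (config := {decide := true}) [lev, det_fin_four]
@[simp] lemma lev_1200 : lev 1 2 0 0 = 0 := by simp (config := {decide := true}) [lev, det_fin_four]
@[simp] lemma lev_1201 : lev 1 2 0 1 = 0 := by simp (config := {decide := true}) [lev, det_fin_four]
@[simp] lemma lev_1202 : lev 1 2 0 2 = 0 := by simp (config := {decide := true}) [lev, det_fin_four]
@[simp] lemma lev_1203 : lev 1 2 0 3 = 1 := by simp (config := {decide := true}) [lev, det_fin_four]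
@[simp] lemma lev_1210 : lev 1 2 1 0 = 0 := by simp (config := {decide := true}) [lev, det_fin_four]
@[simp] lemma lev_1211 : lev 1 2 1 1 = 0 := by simp (config := {decide := true}) [lev, det_fin_four]
@[simp] lemma lev_1212 : lev 1 2 1 2 = 0 := by simp (config := {decide := true}) [lev, det_fin_four]
@[simp] lemma lev_1213 : lev 1 2 1 3 = 0 := by simp (config := {decide := true}) [lev, det_fin_four]
@[simp] lemma lev_1220 : lev 1 2 2 0 = 0 := by simp (config := {decide := true}) [lev, det_fin_four]
@[simp] lemma lev_1221 : lev 1 2 2 1 = 0 := by simp (config := {decide := true}) [lev, det_fin_four]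
@[simp] lemma lev_1222 : lev 1 2 2 2 = 0 := by simp (config := {decide := true}) [lev, det_fin_four]
@[simp] lemma lev_1223 : lev 1 2 2 3 = 0 := by simp (config := {decide := true}) [lev, det_fin_four]
@[simp] lemma lev_1230 : lev 1 2 3 0 = -1 := by simp (config := {decide := true}) [lev, det_fin_four]
@[simp] lemma lev_1231 : lev 1 2 3 1 = 0 := by simp (config := {decide := true}) [lev, det_fin_four]
@[simp] lemma lev_1232 : lev 1 2 3 2 = 0 := by simp (config := {decide := true}) [lev, det_fin_four]
@[simp] lemma lev_1233 : lev 1 2 3 3 = 0 := by simp (config := {decide := true}) [lev, det_fin_four]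
@[simp] lemma lev_1300 : lev 1 3 0 0 = 0 := by simp (config := {decide := true}) [lev, det_fin_four]
@[simp] lemma lev_1301 : lev 1 3 0 1 = 0 := by simp (config := {decide := true}) [lev, det_fin_four]
@[simp] lemma lev_1302 : lev 1 3 0 2 = -1 := by simp (config := {decide := true}) [lev, det_fin_four]
@[simp] lemma lev_1303 : lev 1 3 0 3 = 0 := by simp (config := {decide := true}) [lev, det_fin_four]
@[simp] lemma lev_1310 : lev 1 3 1 0 = 0 := by simp (config := {decide := true}) [lev, det_fin_four]
@[simp] lemma lev_1311 : lev 1 3 1 1 = 0 := by simp (config := {decide := true}) [lev, det_fin_four]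
@[simp] lemma lev_1312 : lev 1 3 1 2 = 0 := by simp (config := {decide := true}) [lev, det_fin_four]
@[simp] lemma lev_1313 : lev 1 3 1 3 = 0 := by simp (config := {decide := true}) [lev, det_fin_four]
@[simp] lemma lev_1320 : lev 1 3 2 0 = 1 := by simp (config := {decide := true}) [lev, det_fin_four]
@[simp] lemma lev_1321 : lev 1 3 2 1 = 0 := by simp (config := {decide := true}) [lev, det_fin_four]
@[simp] lemma lev_1322 : lev 1 3 2 2 = 0 := by simp (config := {decide := true}) [lev, det_fin_four]
@[simp] lemma lev_1323 : lev 1 3 2 3 = 0 := by simp (config := {decide := true}) [lev, det_fin_four]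
@[simp] lemma lev_1330 : lev 1 3 3 0 = 0 := by simp (config := {decide := true}) [lev, det_fin_four]
@[simp] lemma lev_1331 : lev 1 3 3 1 = 0 := by simp (config := {decide := true}) [lev, det_fin_four]
@[simp] lemma lev_1332 : lev 1 3 3 2 = 0 := by simp (config := {decide := true}) [lev, det_fin_four]
@[simp] lemma lev_1333 : lev 1 3 3 3 = 0 := by simp (config := {decide := true}) [lev, det_fin_four]
@[simp] lemma lev_2000 : lev 2 0 0 0 = 0 := by simp (config := {decide := true}) [lev, det_fin_four]
@[simp] lemma lev_2001 : lev 2 0 0 1 = 0 := by simp (config := {decide := true}) [lev, det_fin_four]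
@[simp] lemma lev_2002 : lev 2 0 0 2 = 0 := by simp (config := {decide := true}) [lev, det_fin_four]
@[simp] lemma lev_2003 : lev 2 0 0 3 = 0 := by simp (config := {decide := true}) [lev, det_fin_four]
@[simp] lemma lev_2010 : lev 2 0 1 0 = 0 := by simp (config := {decide := true}) [lev, det_fin_four]
@[simp] lemma lev_2011 : lev 2 0 1 1 = 0 := by simp (config := {decide := true}) [lev, det_fin_four]
@[simp] lemma lev_2012 : lev 2 0 1 2 = 0 := by simp (config := {decide := true}) [lev, det_fin_four]
@[simp] lemma lev_2013 : lev 2 0 1 3 = 1 := by simp (config := {decide := true}) [lev, det_fin_four]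
@[simp] lemma lev_2020 : lev 2 0 2 0 = 0 := by simp (config := {decide := true}) [lev, det_fin_four]
@[simp] lemma lev_2021 : lev 2 0 2 1 = 0 := by simp (config := {decide := true}) [lev, det_fin_four]
@[simp] lemma lev_2022 : lev 2 0 2 2 = 0 := by simp (config := {decide := true}) [lev, det_fin_four]
@[simp] lemma lev_2023 : lev 2 0 2 3 = 0 := by simp (config := {decide := true}) [lev, det_fin_four]
@[simp] lemma lev_2030 : lev 2 0 3 0 = 0 := by simp (config := {decide := true}) [lev, det_fin_four]
@[simp] lemma lev_2031 : lev 2 0 3 1 = -1 := by simp (config := {decide := true}) [lev, det_fin_four]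
@[simp] lemma lev_2032 : lev 2 0 3 2 = 0 := by simp (config := {decide := true}) [lev, det_fin_four]
@[simp] lemma lev_2033 : lev 2 0 3 3 = 0 := by simp (config := {decide := true}) [lev, det_fin_four]
@[simp] lemma lev_2100 : lev 2 1 0 0 = 0 := by simp (config := {decide := true}) [lev, det_fin_four]
@[simp] lemma lev_2101 : lev 2 1 0 1 = 0 := by simp (config := {decide := true}) [lev, det_fin_four]
@[simp] lemma lev_2102 : lev 2 1 0 2 = 0 := by simp (config := {decide := true}) [lev, det_fin_four]
@[simp] lemma lev_2103 : lev 2 1 0 3 = -1 := by simp (config := {decide := true}) [lev, det_fin_four]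
@[simp] lemma lev_2110 : lev 2 1 1 0 = 0 := by simp (config := {decide := true}) [lev, det_fin_four]
@[simp] lemma lev_2111 : lev 2 1 1 1 = 0 := by simp (config := {decide := true}) [lev, det_fin_four]
@[simp] lemma lev_2112 : lev 2 1 1 2 = 0 := by simp (config := {decide := true}) [lev, det_fin_four]
@[simp] lemma lev_2113 : lev 2 1 1 3 = 0 := by simp (config := {decide := true}) [lev, det_fin_four]
@[simp] lemma lev_2120 : lev 2 1 2 0 = 0 := by simp (config := {decide := true}) [lev, det_fin_four]
@[simp] lemma lev_2121 : lev 2 1 2 1 = 0 := by simp (config := {decide := true}) [lev, det_fin_four]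
@[simp] lemma lev_2122 : lev 2 1 2 2 = 0 := by simp (config := {decide := true}) [lev, det_fin_four]
@[simp] lemma lev_2123 : lev 2 1 2 3 = 0 := by simp (config := {decide := true}) [lev, det_fin_four]
@[simp] lemma lev_2130 : lev 2 1 3 0 = 1 := by simp (config := {decide := true}) [lev, det_fin_four]
@[simp] lemma lev_2131 : lev 2 1 3 1 = 0 := by simp (config := {decide := true}) [lev, det_fin_four]
@[simp] lemma lev_2132 : lev 2 1 3 2 = 0 := by simp (config := {decide := true}) [lev, det_fin_four]
@[simp] lemma lev_2133 : lev 2 1 3 3 = 0 := by simp (config := {decide := true}) [lev, det_fin_four]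
@[simp] lemma lev_2200 : lev 2 2 0 0 = 0 := by simp (config := {decide := true}) [lev, det_fin_four]
@[simp] lemma lev_2201 : lev 2 2 0 1 = 0 := by simp (config := {decide := true}) [lev, det_fin_four]
@[simp] lemma lev_2202 : lev 2 2 0 2 = 0 := by simp (config := {decide := true}) [lev, det_fin_four]
@[simp] lemma lev_2203 : lev 2 2 0 3 = 0 := by simp (config := {decide := true}) [lev, det_fin_four]
@[simp] lemma lev_2210 : lev 2 2 1 0 = 0 := by simp (config := {decide := true}) [lev, det_fin_four]
@[simp] lemma lev_2211 : lev 2 2 1 1 = 0 := by simp (config := {decide := true}) [lev, det_fin_four]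
@[simp] lemma lev_2212 : lev 2 2 1 2 = 0 := by simp (config := {decide := true}) [lev, det_fin_four]
@[simp] lemma lev_2213 : lev 2 2 1 3 = 0 := by simp (config := {decide := true}) [lev, det_fin_four]
@[simp] lemma lev_2220 : lev 2 2 2 0 = 0 := by simp (config := {decide := true}) [lev, det_fin_four]
@[simp] lemma lev_2221 : lev 2 2 2 1 = 0 := by simp (config := {decide := true}) [lev, det_fin_four]
@[simp] lemma lev_2222 : lev 2 2 2 2 = 0 := by simp (config := {decide := true}) [lev, det_fin_four]
@[simp] lemma lev_2223 : lev 2 2 2 3 = 0 := by simp (config := {decide := true}) [lev, det_fin_four]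
@[simp] lemma lev_2230 : lev 2 2 3 0 = 0 := by simp (config := {decide := true}) [lev, det_fin_four]
@[simp] lemma lev_2231 : lev 2 2 3 1 = 0 := by simp (config := {decide := true}) [lev, det_fin_four]
@[simp] lemma lev_2232 : lev 2 2 3 2 = 0 := by simp (config := {decide := true}) [lev, det_fin_four]
@[simp] lemma lev_2233 : lev 2 2 3 3 = 0 := by simp (config := {decide := true}) [lev, det_fin_four]
@[simp] lemma lev_2300 : lev 2 3 0 0 = 0 := by simp (config := {decide := true}) [lev, det_fin_four]
@[simp] lemma lev_2301 : lev 2 3 0 1 = 1 := by simp (config := {decide := true}) [lev, det_fin_four]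
@[simp] lemma lev_2302 : lev 2 3 0 2 = 0 := by simp (config := {decide := true}) [lev, det_fin_four]
@[simp] lemma lev_2303 : lev 2 3 0 3 = 0 := by simp (config := {decide := true}) [lev, det_fin_four]
@[simp] lemma lev_2310 : lev 2 3 1 0 = -1 := by simp (config := {decide := true}) [lev, det_fin_four]
@[simp] lemma lev_2311 : lev 2 3 1 1 = 0 := by simp (config := {decide := true}) [lev, det_fin_four]
@[simp] lemma lev_2312 : lev 2 3 1 2 = 0 := by simp (config := {decide := true}) [lev, det_fin_four]
@[simp] lemma lev_2313 : lev 2 3 1 3 = 0 := by simp (config := {decide := true}) [lev, det_fin_four]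
@[simp] lemma lev_2320 : lev 2 3 2 0 = 0 := by simp (config := {decide := true}) [lev, det_fin_four]
@[simp] lemma lev_2321 : lev 2 3 2 1 = 0 := by simp (config := {decide := true}) [lev, det_fin_four]
@[simp] lemma lev_2322 : lev 2 3 2 2 = 0 := by simp (config := {decide := true}) [lev, det_fin_four]
@[simp] lemma lev_2323 : lev 2 3 2 3 = 0 := by simp (config := {decide := true}) [lev, det_fin_four]
@[simp] lemma lev_2330 : lev 2 3 3 0 = 0 := by simp (config := {decide := true}) [lev, det_fin_four]
@[simp] lemma lev_2331 : lev 2 3 3 1 = 0 := by simp (config := {decide := true}) [lev, det_fin_four]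
@[simp] lemma lev_2332 : lev 2 3 3 2 = 0 := by simp (config := {decide := true}) [lev, det_fin_four]
@[simp] lemma lev_2333 : lev 2 3 3 3 = 0 := by simp (config := {decide := true}) [lev, det_fin_four]
@[simp] lemma lev_3000 : lev 3 0 0 0 = 0 := by simp (config := {decide := true}) [lev, det_fin_four]
@[simp] lemma lev_3001 : lev 3 0 0 1 = 0 := by simp (config := {decide := true}) [lev, det_fin_four]
@[simp] lemma lev_3002 : lev 3 0 0 2 = 0 := by simp (config := {decide := true}) [lev, det_fin_four]
@[simp] lemma lev_3003 : lev 3 0 0 3 = 0 := by simp (config := {decide := true}) [lev, det_fin_four]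
@[simp] lemma lev_3010 : lev 3 0 1 0 = 0 := by simp (config := {decide := true}) [lev, det_fin_four]
@[simp] lemma lev_3011 : lev 3 0 1 1 = 0 := by simp (config := {decide := true}) [lev, det_fin_four]
@[simp] lemma lev_3012 : lev 3 0 1 2 = -1 := by simp (config := {decide := true}) [lev, det_fin_four]
@[simp] lemma lev_3013 : lev 3 0 1 3 = 0 := by simp (config := {decide := true}) [lev, det_fin_four]
@[simp] lemma lev_3020 : lev 3 0 2 0 = 0 := by simp (config := {decide := true}) [lev, det_fin_four]
@[simp] lemma lev_3021 : lev 3 0 2 1 = 1 := by simp (config := {decide := true}) [lev, det_fin_four]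
@[simp] lemma lev_3022 : lev 3 0 2 2 = 0 := by simp (config := {decide := true}) [lev, det_fin_four]
@[simp] lemma lev_3023 : lev 3 0 2 3 = 0 := by simp (config := {decide := true}) [lev, det_fin_four]
@[simp] lemma lev_3030 : lev 3 0 3 0 = 0 := by simp (config := {decide := true}) [lev, det_fin_four]
@[simp] lemma lev_3031 : lev 3 0 3 1 = 0 := by simp (config := {decide := true}) [lev, det_fin_four]
@[simp] lemma lev_3032 : lev 3 0 3 2 = 0 := by simp (config := {decide := true}) [lev, det_fin_four]
@[simp] lemma lev_3033 : lev 3 0 3 3 = 0 := by simp (config := {decide := true}) [lev, det_fin_four]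
@[simp] lemma lev_3100 : lev 3 1 0 0 = 0 := by simp (config := {decide := true}) [lev, det_fin_four]
@[simp] lemma lev_3101 : lev 3 1 0 1 = 0 := by simp (config := {decide := true}) [lev, det_fin_four]
@[simp] lemma lev_3102 : lev 3 1 0 2 = 1 := by simp (config := {decide := true}) [lev, det_fin_four]
@[simp] lemma lev_3103 : lev 3 1 0 3 = 0 := by simp (config := {decide := true}) [lev, det_fin_four]
@[simp] lemma lev_3110 : lev 3 1 1 0 = 0 := by simp (config := {decide := true}) [lev, det_fin_four]
@[simp] lemma lev_3111 : lev 3 1 1 1 = 0 := by simp (config := {decide := true}) [lev, det_fin_four]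
@[simp] lemma lev_3112 : lev 3 1 1 2 = 0 := by simp (config := {decide := true}) [lev, det_fin_four]
@[simp] lemma lev_3113 : lev 3 1 1 3 = 0 := by simp (config := {decide := true}) [lev, det_fin_four]
@[simp] lemma lev_3120 : lev 3 1 2 0 = -1 := by simp (config := {decide := true}) [lev, det_fin_four]
@[simp] lemma lev_3121 : lev 3 1 2 1 = 0 := by simp (config := {decide := true}) [lev, det_fin_four]
@[simp] lemma lev_3122 : lev 3 1 2 2 = 0 := by simp (config := {decide := true}) [lev, det_fin_four]
@[simp] lemma lev_3123 : lev 3 1 2 3 = 0 := by simp (config := {decide := true}) [lev, det_fin_four]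
@[simp] lemma lev_3130 : lev 3 1 3 0 = 0 := by simp (config := {decide := true}) [lev, det_fin_four]
@[simp] lemma lev_3131 : lev 3 1 3 1 = 0 := by simp (config := {decide := true}) [lev, det_fin_four]
@[simp] lemma lev_3132 : lev 3 1 3 2 = 0 := by simp (config := {decide := true}) [lev, det_fin_four]
@[simp] lemma lev_3133 : lev 3 1 3 3 = 0 := by simp (config := {decide := true}) [lev, det_fin_four]
@[simp] lemma lev_3200 : lev 3 2 0 0 = 0 := by simp (config := {decide := true}) [lev, det_fin_four]
@[simp] lemma lev_3201 : lev 3 2 0 1 = -1 := by simp (config := {decide := true}) [lev, det_fin_four]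
@[simp] lemma lev_3202 : lev 3 2 0 2 = 0 := by simp (config := {decide := true}) [lev, det_fin_four]
@[simp] lemma lev_3203 : lev 3 2 0 3 = 0 := by simp (config := {decide := true}) [lev, det_fin_four]
@[simp] lemma lev_3210 : lev 3 2 1 0 = 1 := by simp (config := {decide := true}) [lev, det_fin_four]
@[simp] lemma lev_3211 : lev 3 2 1 1 = 0 := by simp (config := {decide := true}) [lev, det_fin_four]
@[simp] lemma lev_3212 : lev 3 2 1 2 = 0 := by simp (config := {decide := true}) [lev, det_fin_four]
@[simp] lemma lev_3213 : lev 3 2 1 3 = 0 := by simp (config := {decide := true}) [lev, det_fin_four]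
@[simp] lemma lev_3220 : lev 3 2 2 0 = 0 := by simp (config := {decide := true}) [lev, det_fin_four]
@[simp] lemma lev_3221 : lev 3 2 2 1 = 0 := by simp (config := {decide := true}) [lev, det_fin_four]
@[simp] lemma lev_3222 : lev 3 2 2 2 = 0 := by simp (config := {decide := true}) [lev, det_fin_four]
@[simp] lemma lev_3223 : lev 3 2 2 3 = 0 := by simp (config := {decide := true}) [lev, det_fin_four]
@[simp] lemma lev_3230 : lev 3 2 3 0 = 0 := by simp (config := {decide := true}) [lev, det_fin_four]
@[simp] lemma lev_3231 : lev 3 2 3 1 = 0 := by simp (config := {decide := true}) [lev, det_fin_four]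
@[simp] lemma lev_3232 : lev 3 2 3 2 = 0 := by simp (config := {decide := true}) [lev, det_fin_four]
@[simp] lemma lev_3233 : lev 3 2 3 3 = 0 := by simp (config := {decide := true}) [lev, det_fin_four]
@[simp] lemma lev_3300 : lev 3 3 0 0 = 0 := by simp (config := {decide := true}) [lev, det_fin_four]
@[simp] lemma lev_3301 : lev 3 3 0 1 = 0 := by simp (config := {decide := true}) [lev, det_fin_four]
@[simp] lemma lev_3302 : lev 3 3 0 2 = 0 := by simp (config := {decide := true}) [lev, det_fin_four]
@[simp] lemma lev_3303 : lev 3 3 0 3 = 0 := by simp (config := {decide := true}) [lev, det_fin_four]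
@[simp] lemma lev_3310 : lev 3 3 1 0 = 0 := by simp (config := {decide := true}) [lev, det_fin_four]
@[simp] lemma lev_3311 : lev 3 3 1 1 = 0 := by simp (config := {decide := true}) [lev, det_fin_four]
@[simp] lemma lev_3312 : lev 3 3 1 2 = 0 := by simp (config := {decide := true}) [lev, det_fin_four]
@[simp] lemma lev_3313 : lev 3 3 1 3 = 0 := by simp (config := {decide := true}) [lev, det_fin_four]
@[simp] lemma lev_3320 : lev 3 3 2 0 = 0 := by simp (config := {decide := true}) [lev, det_fin_four]
@[simp] lemma lev_3321 : lev 3 3 2 1 = 0 := by simp (config := {decide := true}) [lev, det_fin_four]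
@[simp] lemma lev_3322 : lev 3 3 2 2 = 0 := by simp (config := {decide := true}) [lev, det_fin_four]
@[simp] lemma lev_3323 : lev 3 3 2 3 = 0 := by simp (config := {decide := true}) [lev, det_fin_four]
@[simp] lemma lev_3330 : lev 3 3 3 0 = 0 := by simp (config := {decide := true}) [lev, det_fin_four]
@[simp] lemma lev_3331 : lev 3 3 3 1 = 0 := by simp (config := {decide := true}) [lev, det_fin_four]
@[simp] lemma lev_3332 : lev 3 3 3 2 = 0 := by simp (config := {decide := true}) [lev, det_fin_four]
@[simp] lemma lev_3333 : lev 3 3 3 3 = 0 := by simp (config := {decide := true}) [lev, det_fin_four]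

lemma xv_swap (a b : Fin 4) : xv a * xv b = -(xv b * xv a) := by
  have h := ExteriorAlgebra.ι_add_mul_swap (R := ℝ) (Pi.single a 1 : Fin 4 → ℝ) (Pi.single b 1)
  unfold xv; exact eq_neg_of_add_eq_zero_left h
lemma xv_sq (a : Fin 4) : xv a * xv a = 0 := ExteriorAlgebra.ι_sq_zero _
lemma xv_sq' (a : Fin 4) (t : ExteriorAlgebra ℝ (Fin 4 → ℝ)) : xv a * (xv a * t) = 0 := by
  rw [← mul_assoc, xv_sq, zero_mul]
lemma xv_swap' (a b : Fin 4) (t : ExteriorAlgebra ℝ (Fin 4 → ℝ)) :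
    xv a * (xv b * t) = -(xv b * (xv a * t)) := by
  rw [← mul_assoc, xv_swap a b, neg_mul, mul_assoc]
lemma s10 (t) : xv 1 * (xv 0 * t) = -(xv 0 * (xv 1 * t)) := xv_swap' 1 0 t
lemma s20 (t) : xv 2 * (xv 0 * t) = -(xv 0 * (xv 2 * t)) := xv_swap' 2 0 t
lemma s21 (t) : xv 2 * (xv 1 * t) = -(xv 1 * (xv 2 * t)) := xv_swap' 2 1 t
lemma s30 (t) : xv 3 * (xv 0 * t) = -(xv 0 * (xv 3 * t)) := xv_swap' 3 0 t
lemma s31 (t) : xv 3 * (xv 1 * t) = -(xv 1 * (xv 3 * t)) := xv_swap' 3 1 t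
lemma s32 (t) : xv 3 * (xv 2 * t) = -(xv 2 * (xv 3 * t)) := xv_swap' 3 2 t
lemma p10 : xv 1 * xv 0 = -(xv 0 * xv 1) := xv_swap 1 0
lemma p20 : xv 2 * xv 0 = -(xv 0 * xv 2) := xv_swap 2 0
lemma p21 : xv 2 * xv 1 = -(xv 1 * xv 2) := xv_swap 2 1
lemma p30 : xv 3 * xv 0 = -(xv 0 * xv 3) := xv_swap 3 0
lemma p31 : xv 3 * xv 1 = -(xv 1 * xv 3) := xv_swap 3 1
lemma p32 : xv 3 * xv 2 = -(xv 2 * xv 3) := xv_swap 3 2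

set_option maxHeartbeats 4000000 in
lemma quad : ∀ a b c d : Fin 4, xv a * (xv b * (xv c * xv d)) = lev a b c d • vol := by
  intro a b c d
  fin_cases a <;> fin_cases b <;> fin_cases c <;> fin_cases d <;>
    simp [vol, mul_assoc, s10, s20, s21, s30, s31, s32, p10, p20, p21, p30, p31, p32,
      xv_sq, xv_sq', mul_neg, neg_neg, neg_mul, mul_zero, zero_mul, neg_zero]

/-- The scalar coefficient produced by a product of four linear forms. -/
noncomputable def SS (a b c d : Fin 4 → ℝ) : ℝ :=
  ∑ σ, ∑ ρ, ∑ ν, ∑ μ, d σ * (c ρ * (b ν * (a μ * lev μ ν ρ σ)))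

set_option maxHeartbeats 4000000 in
lemma inner_eval (v w y z : Fin 4 → ℝ) :
    SS v w y z = Matrix.det (Matrix.of ![v, w, y, z]) := by
  rw [det_fin_four]
  simp [SS, Fin.sum_univ_four]
  ring

set_option maxHeartbeats 4000000 in
lemma prod_expand (a b c d : Fin 4 → ℝ) :
    (∑ μ, a μ • xv μ) * (∑ ν, b ν • xv ν) * (∑ ρ, c ρ • xv ρ) * (∑ σ, d σ • xv σ)
    = SS a b c d • vol := by
  simp only [Finset.sum_mul, Finset.mul_sum, smul_mul_assoc, mul_smul_comm, smul_smul,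
    mul_assoc, quad, Finset.smul_sum]
  simp only [SS, ← Finset.sum_smul]

set_option maxHeartbeats 8000000 in
lemma key (e m : Matrix (Fin 4) (Fin 4) ℝ) :
    ∑ i, ∑ j, ∑ k, ∑ l, lev i j k l * SS ((e * m) i) ((e * m) j) (e k) (e l)
      = 2 * e.det * (m.trace ^ 2 - (m * m).trace) := by
  simp only [inner_eval]
  simp [Fin.sum_univ_four]
  simp [det_fin_four, Matrix.mul_apply, Matrix.trace, Matrix.diag, Fin.sum_univ_four]
  ring

theorem stmt16 (e h : Matrix (Fin 4) (Fin 4) ℝ) (he : IsUnit e.det)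
    (f g : Matrix (Fin 4) (Fin 4) ℝ)
    (hfdef : f = eᵀ * etaHat * h) (hf : fᵀ = -f)
    (hg : g = eᵀ * etaHat * e)
    (θ ηv : Fin 4 → ExteriorAlgebra ℝ (Fin 4 → ℝ))
    (hθ : ∀ i, θ i = ∑ μ, e i μ • xv μ)
    (hη : ∀ i, ηv i = ∑ μ, h i μ • xv μ) :
    ∑ i, ∑ j, ∑ k, ∑ l, lev i j k l • (ηv i * ηv j * θ k * θ l) =
      (-2 * e.det * ((g⁻¹ * f) * (g⁻¹ * f)).trace) • vol ∧
    ∑ i, ∑ j, ∑ k, ∑ l, lev i j k l • (ηv i * ηv j * θ k * θ l) =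
      (2 * e.det * (g⁻¹ * f * g⁻¹ * fᵀ).trace) • vol := by
  have heT : IsUnit eᵀ.det := by rwa [Matrix.det_transpose]
  have hee : etaHat * etaHat = 1 := by
    ext i j
    fin_cases i <;> fin_cases j <;>
      simp [etaHat, Matrix.mul_apply, Fin.sum_univ_four, Matrix.diagonal, Matrix.one_apply]
  have hetainv : etaHat⁻¹ = etaHat := Matrix.inv_eq_right_inv hee
  have hm : g⁻¹ * f = e⁻¹ * h := by
    rw [hg, hfdef, Matrix.mul_inv_rev, Matrix.mul_inv_rev, hetainv]
    simp only [Matrix.mul_assoc]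
    rw [Matrix.nonsing_inv_mul_cancel_left _ _ heT, ← Matrix.mul_assoc etaHat etaHat, hee,
      Matrix.one_mul]
  have hh : h = e * (g⁻¹ * f) := by
    rw [hm, Matrix.mul_nonsing_inv_cancel_left _ _ he]
  have hgT : gᵀ = g := by
    rw [hg]
    simp [Matrix.transpose_mul, Matrix.mul_assoc, etaHat]
  have hgiT : g⁻¹ᵀ = g⁻¹ := by rw [Matrix.transpose_nonsing_inv, hgT]
  have htr : (g⁻¹ * f).trace = 0 := by
    have h1 : (g⁻¹ * f).trace = -(g⁻¹ * f).trace := by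
      conv_lhs => rw [← Matrix.trace_transpose, Matrix.transpose_mul, hf, hgiT, Matrix.neg_mul,
        Matrix.trace_neg, Matrix.trace_mul_comm]
    linarith
  have main : ∑ i, ∑ j, ∑ k, ∑ l, lev i j k l • (ηv i * ηv j * θ k * θ l)
      = (2 * e.det * ((g⁻¹ * f).trace ^ 2 - ((g⁻¹ * f) * (g⁻¹ * f)).trace)) • vol := by
    simp only [hη, hθ, hh, prod_expand, smul_smul, ← Finset.sum_smul]
    congr 1
    exact key e (g⁻¹ * f)
  constructor
  · rw [main, htr]
    congr 1
    ring
  · rw [main, htr, hf]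
    have h2 : g⁻¹ * f * g⁻¹ * -f = -(g⁻¹ * f * (g⁻¹ * f)) := by
      simp [Matrix.mul_neg, Matrix.mul_assoc]
    rw [h2, Matrix.trace_neg]
    congr 1
    ring
end
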